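/- Every matrix in the 6-dimensional space E_IV has rank at most 4, and some matrix in E_IV has rank exactly 4; that is, E_IV is a space of bounded rank 4. -/

import Mathlib

/-!
In the 1-based indexing of the paper, the left kernel of `M_IV(a)` contains the two vectors
`(a3, a4, a5, a6, -a1, -a2)` and `(0, a3, 0, a5, 0, -a1)`, which are linearly independent unless
`a1 = a3 = a5 = 0`; in that case the second and fourth rows vanish. Either way the left kernel has
dimension at least `2`, so the rank is at most `4`. For `a = e₁` the matrix is
`diag(1, 1, 1, 1, 0, 0)`, of rank `4`.
-/

/-- Case (IV) of the main theorem: for `a = (a1,…,a6) ∈ ℂ^6`, the matrix `M_IV(a)`. -/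
noncomputable def MIV (a : Fin 6 → ℂ) : Matrix (Fin 6) (Fin 6) ℂ :=
  !![a 0, a 1, 0, 0, -a 4, -a 5;
     0, a 0, 0, 0, 0, -a 4;
     0, 0, a 0, a 1, a 2, a 3;
     0, 0, 0, a 0, 0, a 2;
     a 2, a 3, a 4, a 5, 0, 0;
     0, a 2, 0, a 4, 0, 0]

open Matrix

theorem Matrix.rank_add_card_le_of_vecMul_eq_zero {K m n ι : Type*} [Field K] [Fintype m]
    [Fintype n] [Fintype ι] (M : Matrix m n K) {u : ι → m → K} (hu : ∀ i, u i ᵥ* M = 0)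
    (hind : LinearIndependent K u) : M.rank + Fintype.card ι ≤ Fintype.card m := by
  have hspan : Submodule.span K (Set.range u) ≤ LinearMap.ker Mᵀ.mulVecLin := by
    rw [Submodule.span_le]
    rintro _ ⟨i, rfl⟩
    simpa [mulVec_transpose] using hu i
  have hker := Submodule.finrank_mono hspan
  rw [finrank_span_eq_card hind] at hker
  have hdim := LinearMap.finrank_range_add_finrank_ker Mᵀ.mulVecLin
  rw [Module.finrank_fintype_fun_eq_card] at hdim
  rw [← rank_transpose]
  exact (Nat.add_le_add_left hker _).trans hdim.le

theorem vecMul_MIV_eq_zero (a : Fin 6 → ℂ) :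
    ![a 2, a 3, a 4, a 5, -a 0, -a 1] ᵥ* MIV a = 0 ∧ ![0, a 2, 0, a 4, 0, -a 0] ᵥ* MIV a = 0 := by
  constructor <;> ext j <;> fin_cases j <;>
    simp [MIV, vecMul, dotProduct, Fin.sum_univ_six] <;> ring

theorem rank_MIV_le (a : Fin 6 → ℂ) : (MIV a).rank ≤ 4 := by
  suffices ∃ u : Fin 2 → Fin 6 → ℂ, (∀ i, u i ᵥ* MIV a = 0) ∧ LinearIndependent ℂ u by
    obtain ⟨u, hu, hind⟩ := this
    simpa using (MIV a).rank_add_card_le_of_vecMul_eq_zero hu hind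
  by_cases hdeg : a 0 = 0 ∧ a 2 = 0 ∧ a 4 = 0
  · obtain ⟨h0, h2, h4⟩ := hdeg
    refine ⟨![Pi.single 1 1, Pi.single 3 1], ?_, ?_⟩
    · intro i
      fin_cases i <;> ext j <;> fin_cases j <;>
        simp [MIV, vecMul, dotProduct, Fin.sum_univ_six, h0, h2, h4]
    · rw [linearIndependent_fin2]
      refine ⟨fun h => ?_, fun c h => ?_⟩
      · simpa using congrFun h 3
      · simpa using congrFun h 1
  · refine ⟨![![a 2, a 3, a 4, a 5, -a 0, -a 1], ![0, a 2, 0, a 4, 0, -a 0]],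
      Fin.forall_fin_two.mpr (vecMul_MIV_eq_zero a), ?_⟩
    rw [linearIndependent_fin2]
    refine ⟨fun h => hdeg ?_, fun c h => hdeg ?_⟩
    · simp [funext_iff, Fin.forall_fin_succ] at h
      tauto
    · simp [funext_iff, Fin.forall_fin_succ, eq_comm] at h
      tauto

theorem MIV_single_zero : MIV (Pi.single 0 1) = diagonal ![1, 1, 1, 1, 0, 0] := by
  ext i j
  fin_cases i <;> fin_cases j <;> simp [MIV]

theorem rank_MIV_single_zero : (MIV (Pi.single 0 1)).rank = 4 := by
  classical
  rw [MIV_single_zero, rank_diagonal, Fintype.card_subtype]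
  simp [Finset.filter, Fin.univ_succ]

/-- Every matrix in the space `E_IV = {M_IV(a) : a ∈ ℂ^6}` has rank at most `4`,
and some matrix in `E_IV` has rank exactly `4`: `E_IV` is of bounded rank `4`. -/
theorem stmt2 :
    (∀ a : Fin 6 → ℂ, (MIV a).rank ≤ 4) ∧ (∃ a : Fin 6 → ℂ, (MIV a).rank = 4) :=
  ⟨rank_MIV_le, _, rank_MIV_single_zero⟩
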